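/- The three polynomials F, F_X, F_Y form a regular sequence in the polynomial ring R[X,Y]. -/

import Mathlib

open MvPolynomial

set_option synthInstance.maxHeartbeats 1000000
set_option maxHeartbeats 1000000

def idxSet (p q : ℕ) : Finset (ℕ × ℕ) :=
  (Finset.range q ×ˢ Finset.range p).filter fun t => t.1 * p + t.2 * q < p * q

/-- `R = K[{A_νμ}]`, the polynomial ring in the indeterminates `A_νμ`, `(ν,μ) ∈ I`. -/
abbrev coefRing (K : Type) [Field K] (p q : ℕ) := MvPolynomial ↥(idxSet p q) K

/-- `R[X,Y]`, with `X 0 = X` and `X 1 = Y`. -/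
abbrev genRing (K : Type) [Field K] (p q : ℕ) := MvPolynomial (Fin 2) (coefRing K p q)

/-- The generic normed Weierstraß polynomial
`F = Y^p − X^q + Σ_{(ν,μ) ∈ I} A_νμ X^ν Y^μ ∈ R[X,Y]` of type `p,q`. -/
noncomputable def genF (K : Type) [Field K] (p q : ℕ) : genRing K p q :=
  X 1 ^ p - X 0 ^ q +
    ∑ i : idxSet p q, C (MvPolynomial.X i) * X 0 ^ (i : ℕ × ℕ).1 * X 1 ^ (i : ℕ × ℕ).2

set_option linter.unusedSectionVars false
set_option linter.unusedVariables false
set_option linter.unnecessarySimpa false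


set_option maxHeartbeats 1000000

section Subst
variable {K : Type*} [CommRing K] {τ : Type*} [DecidableEq τ]

/-- substitution of `g` for the variable `j` -/
noncomputable def substVar (j : τ) (g : MvPolynomial τ K) :
    MvPolynomial τ K →+* MvPolynomial τ K :=
  (aeval (Function.update X j g)).toRingHom

lemma substVar_X_self (j : τ) (g : MvPolynomial τ K) : substVar j g (X j) = g := by
  simp [substVar]

lemma substVar_X_ne (j : τ) (g : MvPolynomial τ K) {t : τ} (h : t ≠ j) :
    substVar j g (X t) = X t := by
  simp [substVar, Function.update_of_ne h]

lemma sub_substVar_mem (j : τ) (g h : MvPolynomial τ K) :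
    h - substVar j g h ∈ Ideal.span {X j - g} := by
  induction h using MvPolynomial.induction_on with
  | C a => simp [substVar]
  | add p r hp hr =>
      have := Ideal.add_mem _ hp hr
      convert this using 1
      simp [map_add]; ring
  | mul_X p t hp =>
      have h1 : p * X t - substVar j g (p * X t)
          = (p - substVar j g p) * X t + substVar j g p * (X t - substVar j g (X t)) := by
        simp [map_mul]; ring
      rw [h1]
      refine Ideal.add_mem _ (Ideal.mul_mem_right _ _ hp) ?_
      by_cases ht : t = j
      · subst ht
        rw [substVar_X_self]
        exact Ideal.mul_mem_left _ _ (Ideal.subset_span rfl)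
      · rw [substVar_X_ne _ _ ht]; simp

lemma substVar_eq_self (j : τ) (g : MvPolynomial τ K) {h : MvPolynomial τ K}
    (hh : j ∉ h.vars) : substVar j g h = h := by
  have : substVar j g h = aeval X h := by
    show (aeval (Function.update X j g)) h = _
    rw [aeval_def, aeval_def, ← coe_eval₂Hom, ← coe_eval₂Hom]
    exact eval₂Hom_congr' rfl
      (fun i hi _ => Function.update_of_ne (by rintro rfl; exact hh hi) _ _) rfl
  rw [this, aeval_X_left_apply]

lemma substVar_killer {j : τ} {f g0 : MvPolynomial τ K} (hsplit : f = X j + g0)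
    (hg : j ∉ g0.vars) : substVar j (X j - f) f = 0 := by
  rw [hsplit]
  have h2 : X j - (X j + g0) = -g0 := by ring
  rw [h2, map_add, substVar_X_self, substVar_eq_self _ _ hg]
  ring


lemma isSMulRegular_quot_of {S : Type*} [CommRing S] (I : Ideal S) (r : S)
    (h : ∀ x, r * x ∈ I → x ∈ I) :
    IsSMulRegular (S ⧸ (I • ⊤ : Submodule S S)) r := by
  have hI : (I • ⊤ : Submodule S S) = I := by
    rw [← Ideal.span_eq I, Submodule.span_smul_eq, Submodule.set_smul_top_eq_span]
  intro a b hab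
  obtain ⟨x, rfl⟩ := Submodule.Quotient.mk_surjective _ a
  obtain ⟨y, rfl⟩ := Submodule.Quotient.mk_surjective _ b
  have : r • (Submodule.Quotient.mk (x - y) : S ⧸ (I • ⊤ : Submodule S S)) = 0 := by
    have hab' : r • (Submodule.Quotient.mk x : S ⧸ (I • ⊤ : Submodule S S)) = r • Submodule.Quotient.mk y := hab
    rw [Submodule.Quotient.mk_sub, smul_sub, hab', sub_self]
  rw [← Submodule.Quotient.mk_smul, Submodule.Quotient.mk_eq_zero, hI, smul_eq_mul] at this
  have := h _ this
  rwa [← Submodule.Quotient.eq, ← hI] at this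

theorem isRegular_of_retractions {S : Type*} [CommRing S] [IsDomain S]
    (φ0 φ1 φ2 : S →+* S) (f0 f1 f2 : S)
    (hk0 : ∀ x, x - φ0 x ∈ Ideal.span {f0})
    (hk1 : ∀ x, x - φ1 x ∈ Ideal.span {f1})
    (hk2 : ∀ x, x - φ2 x ∈ Ideal.span {f2})
    (h00 : φ0 f0 = 0) (h11 : φ1 f1 = 0) (h22 : φ2 f2 = 0)
    (h01 : φ0 f1 = f1) (h02 : φ0 f2 = f2) (h12 : φ1 f2 = f2)
    (hf0 : f0 ≠ 0) (hf1 : f1 ≠ 0) (hf2 : f2 ≠ 0) :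
    RingTheory.Sequence.IsRegular S [f0, f1, f2] := by
  -- kernel facts
  have ker0 : ∀ x, φ0 x = 0 → x ∈ Ideal.span {f0} := fun x hx => by
    have := hk0 x; rwa [hx, sub_zero] at this
  have ker1 : ∀ x, φ1 x = 0 → x ∈ Ideal.span {f1} := fun x hx => by
    have := hk1 x; rwa [hx, sub_zero] at this
  have span0_le : ∀ x ∈ Ideal.span {f0}, φ0 x = 0 := by
    intro x hx
    rw [Ideal.mem_span_singleton] at hx
    obtain ⟨c, rfl⟩ := hx
    rw [map_mul, h00, zero_mul]
  have span01_le : ∀ x ∈ Ideal.span {f0} ⊔ Ideal.span {f1}, φ1 (φ0 x) = 0 := by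
    intro x hx
    obtain ⟨u, hu, v, hv, rfl⟩ := Submodule.mem_sup.mp hx
    rw [Ideal.mem_span_singleton] at hu hv
    obtain ⟨c, rfl⟩ := hu; obtain ⟨d, rfl⟩ := hv
    simp only [map_add, map_mul, h00, h01, h11, zero_mul, mul_zero, add_zero, zero_add]
  have ker01 : ∀ x, φ1 (φ0 x) = 0 → x ∈ Ideal.span {f0} ⊔ Ideal.span {f1} := by
    intro x hx
    have e1 : x - φ0 x ∈ Ideal.span {f0} := hk0 x
    have e2 : φ0 x - φ1 (φ0 x) ∈ Ideal.span {f1} := hk1 (φ0 x)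
    rw [hx, sub_zero] at e2
    have : x = (x - φ0 x) + φ0 x := by ring
    rw [this]
    exact Submodule.add_mem _ (Ideal.mem_sup_left e1) (Ideal.mem_sup_right e2)
  have one_notin : (1 : S) ∉ Ideal.span {f0} ⊔ (Ideal.span {f1} ⊔ Ideal.span {f2}) := by
    intro h1
    obtain ⟨u, hu, w, hw, huw⟩ := Submodule.mem_sup.mp h1
    obtain ⟨v, hv, z, hz, rfl⟩ := Submodule.mem_sup.mp hw
    rw [Ideal.mem_span_singleton] at hu hv hz
    obtain ⟨c, rfl⟩ := hu; obtain ⟨d, rfl⟩ := hv; obtain ⟨e, rfl⟩ := hz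
    have := congrArg (fun t => φ2 (φ1 (φ0 t))) huw.symm
    simp only [map_one, map_add, map_mul, h00, h01, h11, h02, h12, h22,
      zero_mul, mul_zero, add_zero, zero_add] at this
    exact one_ne_zero this
  constructor
  · constructor
    intro i hi
    simp only [List.length_cons, List.length_nil] at hi
    interval_cases i
    · -- f0 regular on S
      have hI : Ideal.ofList ([f0, f1, f2].take 0) = (⊥ : Ideal S) := by
        simp
      rw [hI]
      apply isSMulRegular_quot_of
      intro x hx
      simp only [List.getElem_cons_zero] at hx
      simp only [Ideal.mem_bot] at hx ⊢
      rcases mul_eq_zero.mp hx with h | h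
      · exact absurd h hf0
      · exact h
    · -- f1 regular mod f0
      have hI : Ideal.ofList ([f0, f1, f2].take 1) = Ideal.span {f0} := by
        rw [show ([f0, f1, f2].take 1) = [f0] from rfl, Ideal.ofList_singleton]
      rw [hI]
      apply isSMulRegular_quot_of
      intro x hx
      simp only [List.getElem_cons_succ, List.getElem_cons_zero] at hx ⊢
      have h0 : φ0 (f1 * x) = 0 := span0_le _ hx
      rw [map_mul, h01] at h0
      rcases mul_eq_zero.mp h0 with h | h
      · exact absurd h hf1
      · exact ker0 _ h
    · -- f2 regular mod (f0, f1)
      have hI : Ideal.ofList ([f0, f1, f2].take 2) = Ideal.span {f0} ⊔ Ideal.span {f1} := by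
        rw [show ([f0, f1, f2].take 2) = [f0, f1] from rfl]
        simp [Ideal.ofList_cons, Ideal.ofList_singleton]
      rw [hI]
      apply isSMulRegular_quot_of
      intro x hx
      simp only [List.getElem_cons_succ, List.getElem_cons_zero] at hx ⊢
      have h0 : φ1 (φ0 (f2 * x)) = 0 := span01_le _ hx
      rw [map_mul, map_mul, h02, h12] at h0
      rcases mul_eq_zero.mp h0 with h | h
      · exact absurd h hf2
      · exact ker01 _ h
  · -- quotient nonzero
    intro htop
    have hsp : Ideal.ofList [f0, f1, f2]
        = Ideal.span {f0} ⊔ (Ideal.span {f1} ⊔ Ideal.span {f2}) := by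
      simp [Ideal.ofList_cons, Ideal.ofList_singleton]
    have h1 : (1 : S) ∈ (Ideal.ofList [f0, f1, f2] • ⊤ : Submodule S S) := by
      rw [← htop]; trivial
    rw [← Ideal.span_eq (Ideal.ofList [f0, f1, f2]), Submodule.span_smul_eq,
      Submodule.set_smul_top_eq_span, Ideal.span_eq, hsp] at h1
    exact one_notin h1



section VarsHelpers
variable {K : Type*} [CommRing K] {σ : Type*} [DecidableEq σ]

lemma nmv_add {j : σ} {a b : MvPolynomial σ K} (ha : j ∉ a.vars) (hb : j ∉ b.vars) :
    j ∉ (a + b).vars := fun h => by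
  rcases Finset.mem_union.mp (vars_add_subset a b h) with h' | h' <;> tauto

lemma nmv_sub {j : σ} {a b : MvPolynomial σ K} (ha : j ∉ a.vars) (hb : j ∉ b.vars) :
    j ∉ (a - b).vars := fun h => by
  rcases Finset.mem_union.mp (vars_sub_subset a h) with h' | h' <;> tauto

lemma nmv_neg {j : σ} {a : MvPolynomial σ K} (ha : j ∉ a.vars) : j ∉ (-a).vars := by
  rwa [vars_neg]

lemma nmv_mul {j : σ} {a b : MvPolynomial σ K} (ha : j ∉ a.vars) (hb : j ∉ b.vars) :
    j ∉ (a * b).vars := fun h => by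
  rcases Finset.mem_union.mp (vars_mul a b h) with h' | h' <;> tauto

lemma nmv_pow {j : σ} {a : MvPolynomial σ K} (ha : j ∉ a.vars) (n : ℕ) :
    j ∉ (a ^ n).vars := fun h => ha (vars_pow a n h)

lemma nmv_X [Nontrivial K] {j t : σ} (h : j ≠ t) : j ∉ (X t : MvPolynomial σ K).vars := by
  rw [vars_X]; simp [h]

lemma nmv_natCast {j : σ} (n : ℕ) : j ∉ ((n : MvPolynomial σ K)).vars := by
  rw [← map_natCast (C : K →+* MvPolynomial σ K), vars_C]
  exact Finset.notMem_empty j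

lemma nmv_sum {j : σ} {ι : Type*} (s : Finset ι) (f : ι → MvPolynomial σ K)
    (h : ∀ i ∈ s, j ∉ (f i).vars) : j ∉ (∑ i ∈ s, f i).vars := fun hj => by
  obtain ⟨i, hi, hji⟩ := Finset.mem_biUnion.mp (vars_sum_subset s f hj)
  exact h i hi hji

end VarsHelpers


section Memb
variable {p q : ℕ} (hp : 1 < p) (hpq : p < q)
include hp hpq

lemma mem00 : ((0,0) : ℕ × ℕ) ∈ idxSet p q := by
  simp only [idxSet, Finset.mem_filter, Finset.mem_product, Finset.mem_range]
  refine ⟨⟨by omega, by omega⟩, ?_⟩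
  simpa using Nat.mul_pos (by omega : 0 < p) (by omega : 0 < q)

lemma mem10 : ((1,0) : ℕ × ℕ) ∈ idxSet p q := by
  simp only [idxSet, Finset.mem_filter, Finset.mem_product, Finset.mem_range]
  refine ⟨⟨by omega, by omega⟩, ?_⟩
  have : p * 1 < p * q := by
    apply Nat.mul_lt_mul_of_le_of_lt (le_refl p) (by omega) (by omega)
  omega
lemma mem01 : ((0,1) : ℕ × ℕ) ∈ idxSet p q := by
  simp only [idxSet, Finset.mem_filter, Finset.mem_product, Finset.mem_range]
  refine ⟨⟨by omega, by omega⟩, ?_⟩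
  have : 1 * q < p * q := by
    apply Nat.mul_lt_mul_of_lt_of_le (by omega) (le_refl q) (by omega)
  omega
end Memb

section Conc
variable (K : Type) [Field K] (p q : ℕ)

abbrev TT := MvPolynomial (Fin 2 ⊕ ↥(idxSet p q)) K

noncomputable def xv : TT K p q := X (Sum.inl 0)
noncomputable def yv : TT K p q := X (Sum.inl 1)
noncomputable def av (i : ↥(idxSet p q)) : TT K p q := X (Sum.inr i)

noncomputable def FT : TT K p q :=
  yv K p q ^ p - xv K p q ^ q +
    ∑ i : idxSet p q, av K p q i * xv K p q ^ (i : ℕ × ℕ).1 * yv K p q ^ (i : ℕ × ℕ).2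

noncomputable def FXT : TT K p q :=
  -((q : TT K p q) * xv K p q ^ (q - 1)) +
    ∑ i : idxSet p q, ((i : ℕ × ℕ).1 : TT K p q) *
      (av K p q i * xv K p q ^ ((i : ℕ × ℕ).1 - 1) * yv K p q ^ (i : ℕ × ℕ).2)

noncomputable def FYT : TT K p q :=
  (p : TT K p q) * yv K p q ^ (p - 1) +
    ∑ i : idxSet p q, ((i : ℕ × ℕ).2 : TT K p q) *
      (av K p q i * xv K p q ^ (i : ℕ × ℕ).1 * yv K p q ^ ((i : ℕ × ℕ).2 - 1))

noncomputable def G0 (h0 : ((0,0) : ℕ × ℕ) ∈ idxSet p q) : TT K p q :=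
  yv K p q ^ p - xv K p q ^ q +
    ∑ i ∈ Finset.univ.erase (⟨(0,0), h0⟩ : ↥(idxSet p q)),
      av K p q i * xv K p q ^ (i : ℕ × ℕ).1 * yv K p q ^ (i : ℕ × ℕ).2

noncomputable def G1 (h1 : ((1,0) : ℕ × ℕ) ∈ idxSet p q) : TT K p q :=
  -((q : TT K p q) * xv K p q ^ (q - 1)) +
    ∑ i ∈ Finset.univ.erase (⟨(1,0), h1⟩ : ↥(idxSet p q)),
      ((i : ℕ × ℕ).1 : TT K p q) *
        (av K p q i * xv K p q ^ ((i : ℕ × ℕ).1 - 1) * yv K p q ^ (i : ℕ × ℕ).2)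

noncomputable def G2 (h2 : ((0,1) : ℕ × ℕ) ∈ idxSet p q) : TT K p q :=
  (p : TT K p q) * yv K p q ^ (p - 1) +
    ∑ i ∈ Finset.univ.erase (⟨(0,1), h2⟩ : ↥(idxSet p q)),
      ((i : ℕ × ℕ).2 : TT K p q) *
        (av K p q i * xv K p q ^ (i : ℕ × ℕ).1 * yv K p q ^ ((i : ℕ × ℕ).2 - 1))

lemma FT_split (h0 : ((0,0) : ℕ × ℕ) ∈ idxSet p q) :
    FT K p q = av K p q ⟨(0,0), h0⟩ + G0 K p q h0 := by
  rw [FT, G0, ← Finset.add_sum_erase _ _ (Finset.mem_univ (⟨(0,0), h0⟩ : ↥(idxSet p q)))]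
  simp only [pow_zero, mul_one]
  ring

lemma FXT_split (h1 : ((1,0) : ℕ × ℕ) ∈ idxSet p q) :
    FXT K p q = av K p q ⟨(1,0), h1⟩ + G1 K p q h1 := by
  rw [FXT, G1, ← Finset.add_sum_erase _ _ (Finset.mem_univ (⟨(1,0), h1⟩ : ↥(idxSet p q)))]
  simp only [pow_zero, mul_one, Nat.cast_one, one_mul, Nat.sub_self]
  ring

lemma FYT_split (h2 : ((0,1) : ℕ × ℕ) ∈ idxSet p q) :
    FYT K p q = av K p q ⟨(0,1), h2⟩ + G2 K p q h2 := by
  rw [FYT, G2, ← Finset.add_sum_erase _ _ (Finset.mem_univ (⟨(0,1), h2⟩ : ↥(idxSet p q)))]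
  simp only [pow_zero, mul_one, Nat.cast_one, one_mul, Nat.sub_self]
  ring

end Conc

section Vars
variable (K : Type) [Field K] (p q : ℕ)

lemma nmv_term (j : Fin 2 ⊕ ↥(idxSet p q)) (i : ↥(idxSet p q))
    (hj0 : j ≠ Sum.inl 0) (hj1 : j ≠ Sum.inl 1) (hji : j ≠ Sum.inr i) (m n : ℕ) :
    j ∉ (av K p q i * xv K p q ^ m * yv K p q ^ n).vars := by
  exact nmv_mul (nmv_mul (nmv_X hji) (nmv_pow (nmv_X hj0) m)) (nmv_pow (nmv_X hj1) n)

lemma nmv_G0 (hp : 1 < p) (hpq : p < q) (h0 : ((0,0) : ℕ × ℕ) ∈ idxSet p q) :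
    (Sum.inr (⟨(0,0), h0⟩ : ↥(idxSet p q)) : Fin 2 ⊕ ↥(idxSet p q)) ∉ (G0 K p q h0).vars := by
  rw [G0]
  refine nmv_add (nmv_sub (nmv_pow (nmv_X (by simp)) p) (nmv_pow (nmv_X (by simp)) q)) ?_
  refine nmv_sum _ _ fun i hi => ?_
  exact nmv_term K p q _ i (by simp) (by simp)
    (fun e => (Finset.ne_of_mem_erase hi) (Sum.inr_injective e).symm) _ _

-- inr i0 not in vars FXT
lemma nmv_i0_FXT (h0 : ((0,0) : ℕ × ℕ) ∈ idxSet p q) :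
    (Sum.inr (⟨(0,0), h0⟩ : ↥(idxSet p q)) : Fin 2 ⊕ ↥(idxSet p q)) ∉ (FXT K p q).vars := by
  rw [FXT]
  refine nmv_add (nmv_neg (nmv_mul (nmv_natCast q) (nmv_pow (nmv_X (by simp)) _))) ?_
  refine nmv_sum _ _ fun i _ => ?_
  by_cases h : i = ⟨(0,0), h0⟩
  · subst h
    simp only [Nat.cast_zero, zero_mul]
    simpa using Finset.not_mem_empty _
  · exact nmv_mul (nmv_natCast _)
      (nmv_term K p q _ i (by simp) (by simp) (fun e => h (Sum.inr_injective e).symm) _ _)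
end Vars

lemma nmv_zero {K : Type*} [CommRing K] {σ : Type*} {j : σ} :
    j ∉ (0 : MvPolynomial σ K).vars := by
  simpa using Finset.not_mem_empty _

section Vars2
variable (K : Type) [Field K] (p q : ℕ)

lemma nmv_i0_FYT (h0 : ((0,0) : ℕ × ℕ) ∈ idxSet p q) :
    (Sum.inr (⟨(0,0), h0⟩ : ↥(idxSet p q)) : Fin 2 ⊕ ↥(idxSet p q)) ∉ (FYT K p q).vars := by
  rw [FYT]
  refine nmv_add (nmv_mul (nmv_natCast p) (nmv_pow (nmv_X (by simp)) _)) ?_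
  refine nmv_sum _ _ fun i _ => ?_
  by_cases h : i = ⟨(0,0), h0⟩
  · subst h
    simp only [Nat.cast_zero, zero_mul]
    exact nmv_zero
  · exact nmv_mul (nmv_natCast _)
      (nmv_term K p q _ i (by simp) (by simp) (fun e => h (Sum.inr_injective e).symm) _ _)

lemma nmv_i1_FYT (h1 : ((1,0) : ℕ × ℕ) ∈ idxSet p q) :
    (Sum.inr (⟨(1,0), h1⟩ : ↥(idxSet p q)) : Fin 2 ⊕ ↥(idxSet p q)) ∉ (FYT K p q).vars := by
  rw [FYT]
  refine nmv_add (nmv_mul (nmv_natCast p) (nmv_pow (nmv_X (by simp)) _)) ?_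
  refine nmv_sum _ _ fun i _ => ?_
  by_cases h : i = ⟨(1,0), h1⟩
  · subst h
    simp only [Nat.cast_zero, zero_mul]
    exact nmv_zero
  · exact nmv_mul (nmv_natCast _)
      (nmv_term K p q _ i (by simp) (by simp) (fun e => h (Sum.inr_injective e).symm) _ _)

lemma nmv_G1 (h1 : ((1,0) : ℕ × ℕ) ∈ idxSet p q) :
    (Sum.inr (⟨(1,0), h1⟩ : ↥(idxSet p q)) : Fin 2 ⊕ ↥(idxSet p q)) ∉ (G1 K p q h1).vars := by
  rw [G1]
  refine nmv_add (nmv_neg (nmv_mul (nmv_natCast q) (nmv_pow (nmv_X (by simp)) _))) ?_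
  refine nmv_sum _ _ fun i hi => ?_
  exact nmv_mul (nmv_natCast _)
    (nmv_term K p q _ i (by simp) (by simp)
      (fun e => (Finset.ne_of_mem_erase hi) (Sum.inr_injective e).symm) _ _)

lemma nmv_G2 (h2 : ((0,1) : ℕ × ℕ) ∈ idxSet p q) :
    (Sum.inr (⟨(0,1), h2⟩ : ↥(idxSet p q)) : Fin 2 ⊕ ↥(idxSet p q)) ∉ (G2 K p q h2).vars := by
  rw [G2]
  refine nmv_add (nmv_mul (nmv_natCast p) (nmv_pow (nmv_X (by simp)) _)) ?_
  refine nmv_sum _ _ fun i hi => ?_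
  exact nmv_mul (nmv_natCast _)
    (nmv_term K p q _ i (by simp) (by simp)
      (fun e => (Finset.ne_of_mem_erase hi) (Sum.inr_injective e).symm) _ _)

end Vars2

section NZ
variable (K : Type) [Field K] [CharZero K] (p q : ℕ)

lemma FT_ne (hp : 0 < p) : FT K p q ≠ 0 := by
  intro h
  have := congrArg (eval (Sum.elim (fun j : Fin 2 => if j = 0 then (1:K) else 0)
    (fun _ => 0))) h
  simp [FT, xv, yv, av, zero_pow hp.ne'] at this

lemma FXT_ne (hq : 0 < q) : FXT K p q ≠ 0 := by
  intro h
  have := congrArg (eval (Sum.elim (fun j : Fin 2 => if j = 0 then (1:K) else 0)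
    (fun _ => 0))) h
  simp [FXT, xv, yv, av] at this
  omega

lemma FYT_ne (hp : 0 < p) : FYT K p q ≠ 0 := by
  intro h
  have := congrArg (eval (Sum.elim (fun j : Fin 2 => if j = 1 then (1:K) else 0)
    (fun _ => 0))) h
  simp [FYT, xv, yv, av] at this
  omega
end NZ

section MapLemmas
variable (K : Type) [Field K] (p q : ℕ)
lemma map_genF : iterToSum K (Fin 2) ↥(idxSet p q) (genF K p q) = FT K p q := by
  rw [genF, FT]
  simp [map_sum, xv, yv, av, mul_comm, iterToSum_X, iterToSum_C_X]

lemma map_pderiv0 :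
    iterToSum K (Fin 2) ↥(idxSet p q) (pderiv 0 (genF K p q)) = FXT K p q := by
  rw [genF, FXT]
  simp only [map_add, map_sub, map_sum, pderiv_mul, pderiv_pow, pderiv_C,
    pderiv_X_self, pderiv_X_of_ne (show (1 : Fin 2) ≠ 0 by decide),
    pderiv_X_of_ne (show (0 : Fin 2) ≠ 1 by decide)]
  simp [map_sum, xv, yv, av, mul_comm, iterToSum_X, iterToSum_C_X]
  exact Finset.sum_congr rfl fun i _ => by ring

lemma map_pderiv1 :
    iterToSum K (Fin 2) ↥(idxSet p q) (pderiv 1 (genF K p q)) = FYT K p q := by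
  rw [genF, FYT]
  simp only [map_add, map_sub, map_sum, pderiv_mul, pderiv_pow, pderiv_C,
    pderiv_X_self, pderiv_X_of_ne (show (1 : Fin 2) ≠ 0 by decide),
    pderiv_X_of_ne (show (0 : Fin 2) ≠ 1 by decide)]
  simp [map_sum, xv, yv, av, mul_comm, iterToSum_X, iterToSum_C_X]
  exact Finset.sum_congr rfl fun i _ => by ring



end MapLemmas

/-- `F, F_X, F_Y` form a regular sequence in `R[X,Y]`. -/
theorem genF_isRegular_sequence (K : Type) [Field K] [IsAlgClosed K] [CharZero K]
    (p q : ℕ) (hp : 1 < p) (hpq : p < q) (hco : Nat.Coprime p q) :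
    RingTheory.Sequence.IsRegular (genRing K p q)
      [genF K p q, pderiv 0 (genF K p q), pderiv 1 (genF K p q)] := by
  classical
  have hp0 : 0 < p := by omega
  have hq0 : 0 < q := by omega
  have h0 := mem00 hp hpq
  have h1 := mem10 hp hpq
  have h2 := mem01 hp hpq
  set j0 : Fin 2 ⊕ ↥(idxSet p q) := Sum.inr ⟨(0,0), h0⟩ with hj0def
  set j1 : Fin 2 ⊕ ↥(idxSet p q) := Sum.inr ⟨(1,0), h1⟩ with hj1def
  set j2 : Fin 2 ⊕ ↥(idxSet p q) := Sum.inr ⟨(0,1), h2⟩ with hj2def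
  have hreg : RingTheory.Sequence.IsRegular (TT K p q) [FT K p q, FXT K p q, FYT K p q] := by
    apply isRegular_of_retractions
      (substVar j0 (X j0 - FT K p q)) (substVar j1 (X j1 - FXT K p q))
      (substVar j2 (X j2 - FYT K p q))
    · intro x
      have hmm := sub_substVar_mem j0 (X j0 - FT K p q) x
      rwa [sub_sub_cancel] at hmm
    · intro x
      have hmm := sub_substVar_mem j1 (X j1 - FXT K p q) x
      rwa [sub_sub_cancel] at hmm
    · intro x
      have hmm := sub_substVar_mem j2 (X j2 - FYT K p q) x
      rwa [sub_sub_cancel] at hmm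
    · exact substVar_killer (by rw [FT_split K p q h0]; rfl) (nmv_G0 K p q hp hpq h0)
    · exact substVar_killer (by rw [FXT_split K p q h1]; rfl) (nmv_G1 K p q h1)
    · exact substVar_killer (by rw [FYT_split K p q h2]; rfl) (nmv_G2 K p q h2)
    · exact substVar_eq_self _ _ (nmv_i0_FXT K p q h0)
    · exact substVar_eq_self _ _ (nmv_i0_FYT K p q h0)
    · exact substVar_eq_self _ _ (nmv_i1_FYT K p q h1)
    · exact FT_ne K p q hp0
    · exact FXT_ne K p q hq0
    · exact FYT_ne K p q hp0
  let E : genRing K p q ≃+* TT K p q := (sumAlgEquiv K (Fin 2) ↥(idxSet p q)).symm.toRingEquiv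
  have hfa : List.Forall₂ (fun r s => ∀ x, E.toAddEquiv (r • x) = s • E.toAddEquiv x)
      [genF K p q, pderiv 0 (genF K p q), pderiv 1 (genF K p q)]
      [FT K p q, FXT K p q, FYT K p q] := by
    have hE : ∀ y, E y = iterToSum K (Fin 2) ↥(idxSet p q) y := fun y => by
      have hh : E.toRingHom = iterToSum K (Fin 2) ↥(idxSet p q) := by
        apply MvPolynomial.ringHom_ext'
        · apply MvPolynomial.ringHom_ext
          · intro a; simp [E, iterToSum_C_C]
          · intro i; simp [E, iterToSum_C_X]
        · intro i; simp [E, iterToSum_X]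
      exact RingHom.congr_fun hh y
    refine List.Forall₂.cons (fun x => ?_) (List.Forall₂.cons (fun x => ?_)
      (List.Forall₂.cons (fun x => ?_) List.Forall₂.nil))
    · show E (genF K p q * x) = FT K p q * E x
      rw [hE, hE, map_mul, map_genF]
    · show E (pderiv 0 (genF K p q) * x) = FXT K p q * E x
      rw [hE, hE, map_mul, map_pderiv0]
    · show E (pderiv 1 (genF K p q) * x) = FYT K p q * E x
      rw [hE, hE, map_mul, map_pderiv1]
  exact (AddEquiv.isRegular_congr hfa).mpr hreg
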